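/- For the fidelity between a single-qubit state ρ with Bloch vector a⃗ and its (normalized) post-measurement state ρ_± = M_± ρ M_±/Tr(M_± ρ M_±), one has F(ρ, ρ_±) = 1 − [1−(a⃗·n̂)²][1−√(1−ε²)] / [2(1 ± ε a⃗·n̂)]. In particular F = 1 whenever a⃗·n̂ = ±1 (any ε), and for a⃗ = 0 the fidelity equals (1+√(1−ε²))/2, which is strictly decreasing in ε on [0,1]. -/

import Mathlib

open Matrix Complex

noncomputable section

/-- The Pauli matrices σ_x, σ_y, σ_z. -/
def pauli : Fin 3 → Matrix (Fin 2) (Fin 2) ℂ :=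
  ![!![0, 1; 1, 0], !![0, -Complex.I; Complex.I, 0], !![1, 0; 0, -1]]

/-- n̂ · σ⃗ for a real vector n̂. -/
def dotSigma (n : Fin 3 → ℝ) : Matrix (Fin 2) (Fin 2) ℂ := ∑ i, (n i : ℂ) • pauli i

/-- ε₊ = √((1+ε)/2) + √((1−ε)/2). -/
def epsPlus (ε : ℝ) : ℝ := Real.sqrt ((1 + ε) / 2) + Real.sqrt ((1 - ε) / 2)

/-- ε₋ = √((1+ε)/2) − √((1−ε)/2). -/
def epsMinus (ε : ℝ) : ℝ := Real.sqrt ((1 + ε) / 2) - Real.sqrt ((1 - ε) / 2)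

/-- M₊(ε,n̂) = (1/2)(ε₊ I + ε₋ n̂·σ). -/
def Mplus (ε : ℝ) (n : Fin 3 → ℝ) : Matrix (Fin 2) (Fin 2) ℂ :=
  (1 / 2 : ℂ) • ((epsPlus ε : ℂ) • (1 : Matrix (Fin 2) (Fin 2) ℂ) + (epsMinus ε : ℂ) • dotSigma n)

/-- M₋(ε,n̂) = (1/2)(ε₊ I − ε₋ n̂·σ). -/
def Mminus (ε : ℝ) (n : Fin 3 → ℝ) : Matrix (Fin 2) (Fin 2) ℂ :=
  (1 / 2 : ℂ) • ((epsPlus ε : ℂ) • (1 : Matrix (Fin 2) (Fin 2) ℂ) - (epsMinus ε : ℂ) • dotSigma n)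

/-- Single-qubit state with Bloch vector a⃗. -/
def rhoBloch (a : Fin 3 → ℝ) : Matrix (Fin 2) (Fin 2) ℂ :=
  (1 / 2 : ℂ) • (1 + dotSigma a)

/-- Single-qubit fidelity F(ρ,σ) = Tr(ρσ) + 2√(det ρ · det σ). -/
def fid (ρ σ : Matrix (Fin 2) (Fin 2) ℂ) : ℝ :=
  ((ρ * σ).trace).re + 2 * Real.sqrt (ρ.det.re * σ.det.re)

/-- The normalized post-measurement state M ρ M / Tr(M ρ M). -/
def postState (M ρ : Matrix (Fin 2) (Fin 2) ℂ) : Matrix (Fin 2) (Fin 2) ℂ :=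
  ((M * ρ * M).trace)⁻¹ • (M * ρ * M)

/-! Every operator in sight has the form `(1/2)(p I + v⃗·σ)`. For `M` of this form with
`|v⃗| ≤ |p|` and a state `ρ` with Bloch vector `a⃗`, the fidelity of `ρ` with `MρM / Tr(MρM)`
is `(Tr(ρMρM) + 2 det ρ det M) / Tr(MρM)`, and the `|a⃗|²` terms of `Tr(ρMρM)` cancel
against `2 det ρ det M`, leaving `(p + a⃗·v⃗)² / (p² + |v⃗|² + 2p a⃗·v⃗)`. For `M₊` one has
`p = ε₊`, `v⃗ = ε₋ n̂`, with `ε₊ε₋ = ε` and `ε±² = 1 ± √(1 - ε²)`; `M₋` is `M₊` for `-n̂`. -/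

def blochMatrix (p : ℝ) (v : Fin 3 → ℝ) : Matrix (Fin 2) (Fin 2) ℂ :=
  (1 / 2 : ℂ) • ((p : ℂ) • 1 + dotSigma v)

lemma dotSigma_smul (c : ℝ) (v : Fin 3 → ℝ) : dotSigma (c • v) = (c : ℂ) • dotSigma v := by
  simp only [dotSigma, Finset.smul_sum, smul_smul, Pi.smul_apply, smul_eq_mul, ofReal_mul]

lemma dotSigma_neg (v : Fin 3 → ℝ) : dotSigma (-v) = -dotSigma v := by
  simp [dotSigma]

lemma rhoBloch_eq_blochMatrix (a : Fin 3 → ℝ) : rhoBloch a = blochMatrix 1 a := by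
  simp [rhoBloch, blochMatrix]

lemma Mplus_eq_blochMatrix (ε : ℝ) (n : Fin 3 → ℝ) :
    Mplus ε n = blochMatrix (epsPlus ε) (epsMinus ε • n) := by
  rw [Mplus, blochMatrix, dotSigma_smul]

lemma Mminus_eq_Mplus_neg (ε : ℝ) (n : Fin 3 → ℝ) : Mminus ε n = Mplus ε (-n) := by
  rw [Mminus, Mplus, dotSigma_neg, smul_neg, sub_eq_add_neg]

lemma blochMatrix_eq_of (p : ℝ) (v : Fin 3 → ℝ) :
    blochMatrix p v =
      !![(((p + v 2) / 2 : ℝ) : ℂ), ((v 0 / 2 : ℝ) : ℂ) - ((v 1 / 2 : ℝ) : ℂ) * I;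
        ((v 0 / 2 : ℝ) : ℂ) + ((v 1 / 2 : ℝ) : ℂ) * I, (((p - v 2) / 2 : ℝ) : ℂ)] := by
  ext i j
  fin_cases i <;> fin_cases j <;>
    simp [blochMatrix, dotSigma, pauli, Fin.sum_univ_three] <;> ring

lemma det_blochMatrix (p : ℝ) (v : Fin 3 → ℝ) :
    (blochMatrix p v).det = (((p ^ 2 - v ⬝ᵥ v) / 4 : ℝ) : ℂ) := by
  rw [blochMatrix_eq_of, det_fin_two_of, Complex.ext_iff]
  simp only [dotProduct, Fin.sum_univ_three, add_re, add_im, mul_re, mul_im, sub_re, sub_im,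
    ofReal_re, ofReal_im, I_re, I_im]
  constructor <;> ring

lemma trace_blochMatrix_conj (p : ℝ) (v a : Fin 3 → ℝ) :
    (blochMatrix p v * blochMatrix 1 a * blochMatrix p v).trace
      = (((p ^ 2 + v ⬝ᵥ v + 2 * p * (a ⬝ᵥ v)) / 4 : ℝ) : ℂ) := by
  rw [blochMatrix_eq_of, blochMatrix_eq_of, Complex.ext_iff]
  simp only [mul_fin_two, trace_fin_two_of, dotProduct, Fin.sum_univ_three, add_re, add_im,
    mul_re, mul_im, sub_re, sub_im, ofReal_re, ofReal_im, I_re, I_im]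
  constructor <;> ring

lemma trace_blochMatrix_mul_conj (p : ℝ) (v a : Fin 3 → ℝ) :
    (blochMatrix 1 a * (blochMatrix p v * blochMatrix 1 a * blochMatrix p v)).trace
      = ((((p + a ⬝ᵥ v) ^ 2 + v ⬝ᵥ v + 2 * p * (a ⬝ᵥ v) + p ^ 2 * (a ⬝ᵥ a)
          - (a ⬝ᵥ a) * (v ⬝ᵥ v) + (a ⬝ᵥ v) ^ 2) / 8 : ℝ) : ℂ) := by
  rw [blochMatrix_eq_of, blochMatrix_eq_of, Complex.ext_iff]
  simp only [mul_fin_two, trace_fin_two_of, dotProduct, Fin.sum_univ_three, add_re, add_im,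
    mul_re, mul_im, sub_re, sub_im, ofReal_re, ofReal_im, I_re, I_im]
  constructor <;> ring

lemma fid_postState {ρ M : Matrix (Fin 2) (Fin 2) ℂ} {t N d e : ℝ}
    (ht : (M * ρ * M).trace = t) (hN : (ρ * (M * ρ * M)).trace = N)
    (hd : ρ.det = d) (he : M.det = e) (ht₀ : 0 < t) (hd₀ : 0 ≤ d) (he₀ : 0 ≤ e) :
    fid ρ (postState M ρ) = (N + 2 * d * e) / t := by
  rw [fid, postState, Matrix.mul_smul, trace_smul, det_smul, det_mul, det_mul, ht, hN, hd, he,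
    Fintype.card_fin, smul_eq_mul]
  simp only [← ofReal_inv, ← ofReal_pow, ← ofReal_mul, ofReal_re]
  have hsqrt : √(d * (t⁻¹ ^ 2 * (e * d * e))) = d * e / t := by
    rw [show d * (t⁻¹ ^ 2 * (e * d * e)) = (d * e / t) ^ 2 by field_simp]
    exact Real.sqrt_sq (by positivity)
  rw [hsqrt]
  field_simp

lemma fid_rhoBloch_postState_blochMatrix (p : ℝ) (v a : Fin 3 → ℝ) (ha : a ⬝ᵥ a ≤ 1)
    (hv : v ⬝ᵥ v ≤ p ^ 2) (ht : 0 < p ^ 2 + v ⬝ᵥ v + 2 * p * (a ⬝ᵥ v)) :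
    fid (rhoBloch a) (postState (blochMatrix p v) (rhoBloch a))
      = (p + a ⬝ᵥ v) ^ 2 / (p ^ 2 + v ⬝ᵥ v + 2 * p * (a ⬝ᵥ v)) := by
  rw [rhoBloch_eq_blochMatrix, fid_postState (trace_blochMatrix_conj p v a)
    (trace_blochMatrix_mul_conj p v a) (det_blochMatrix 1 a) (det_blochMatrix p v)
    (by linarith) (by linarith) (by linarith)]
  field_simp
  ring

lemma sqrt_half_one_add_mul_sqrt_half_one_sub {ε : ℝ} (hε : -1 ≤ ε) :
    √((1 + ε) / 2) * √((1 - ε) / 2) = √(1 - ε ^ 2) / 2 := by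
  rw [← Real.sqrt_mul (by linarith),
    show (1 + ε) / 2 * ((1 - ε) / 2) = (1 - ε ^ 2) / 2 ^ 2 by ring,
    Real.sqrt_div' _ (by positivity), Real.sqrt_sq zero_le_two]

lemma epsPlus_mul_epsMinus {ε : ℝ} (hε₁ : -1 ≤ ε) (hε₂ : ε ≤ 1) :
    epsPlus ε * epsMinus ε = ε := by
  rw [epsPlus, epsMinus]
  linear_combination Real.sq_sqrt (by linarith : 0 ≤ (1 + ε) / 2)
    - Real.sq_sqrt (by linarith : 0 ≤ (1 - ε) / 2)

lemma epsPlus_sq {ε : ℝ} (hε₁ : -1 ≤ ε) (hε₂ : ε ≤ 1) :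
    epsPlus ε ^ 2 = 1 + √(1 - ε ^ 2) := by
  rw [epsPlus, add_sq, Real.sq_sqrt (by linarith), Real.sq_sqrt (by linarith), mul_assoc,
    sqrt_half_one_add_mul_sqrt_half_one_sub hε₁]
  ring

lemma epsMinus_sq {ε : ℝ} (hε₁ : -1 ≤ ε) (hε₂ : ε ≤ 1) :
    epsMinus ε ^ 2 = 1 - √(1 - ε ^ 2) := by
  rw [epsMinus, sub_sq, Real.sq_sqrt (by linarith), Real.sq_sqrt (by linarith), mul_assoc,
    sqrt_half_one_add_mul_sqrt_half_one_sub hε₁]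
  ring

lemma fid_rhoBloch_postState_Mplus {ε : ℝ} {n a : Fin 3 → ℝ} (hε₁ : -1 ≤ ε) (hε₂ : ε ≤ 1)
    (hn : n ⬝ᵥ n = 1) (ha : a ⬝ᵥ a ≤ 1) (hd : 0 < 1 + ε * (a ⬝ᵥ n)) :
    fid (rhoBloch a) (postState (Mplus ε n) (rhoBloch a))
      = 1 - (1 - (a ⬝ᵥ n) ^ 2) * (1 - √(1 - ε ^ 2)) / (2 * (1 + ε * (a ⬝ᵥ n))) := by
  have hp := epsPlus_sq hε₁ hε₂
  have hm := epsMinus_sq hε₁ hε₂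
  have hpm := epsPlus_mul_epsMinus hε₁ hε₂
  have hvv : (epsMinus ε • n) ⬝ᵥ (epsMinus ε • n) = epsMinus ε ^ 2 := by
    rw [smul_dotProduct, dotProduct_smul, hn, smul_eq_mul, smul_eq_mul]
    ring
  have hden : epsPlus ε ^ 2 + epsMinus ε ^ 2 + 2 * epsPlus ε * (epsMinus ε * (a ⬝ᵥ n))
      = 2 * (1 + ε * (a ⬝ᵥ n)) := by
    linear_combination hp + hm + 2 * (a ⬝ᵥ n) * hpm
  have hav : a ⬝ᵥ (epsMinus ε • n) = epsMinus ε * (a ⬝ᵥ n) := dotProduct_smul _ _ _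
  have hle : epsMinus ε ^ 2 ≤ epsPlus ε ^ 2 := by
    rw [hp, hm]
    linarith [Real.sqrt_nonneg (1 - ε ^ 2)]
  rw [Mplus_eq_blochMatrix, fid_rhoBloch_postState_blochMatrix _ _ _ ha (hvv ▸ hle)
    (by rw [hvv, hav, hden]; linarith), hvv, hav, hden, eq_sub_iff_add_eq, ← add_div, div_eq_one_iff_eq (by positivity)]
  linear_combination hp + (a ⬝ᵥ n) ^ 2 * hm + 2 * (a ⬝ᵥ n) * hpm

lemma strictAntiOn_sqrt_one_sub_sq : StrictAntiOn (fun e : ℝ => √(1 - e ^ 2)) (Set.Icc 0 1) :=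
  fun x hx y hy hxy ↦ Real.sqrt_lt_sqrt (by nlinarith [hy.1, hy.2]) (by nlinarith [hx.1])

/-- F(ρ,ρ_±) = 1 − [1−(a⃗·n̂)²][1−√(1−ε²)]/[2(1 ± ε a⃗·n̂)];
in particular F = 1 when a⃗·n̂ = ±1, for a⃗ = 0 the fidelity is (1+√(1−ε²))/2,
which is strictly decreasing in ε on [0,1]. -/
theorem fidelity_post_measurement (ε : ℝ) (n a : Fin 3 → ℝ)
    (hε0 : 0 ≤ ε) (hε1 : ε ≤ 1) (hn : n 0 ^ 2 + n 1 ^ 2 + n 2 ^ 2 = 1)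
    (ha : a ⬝ᵥ a ≤ 1)
    (hdp : 0 < 1 + ε * (a ⬝ᵥ n)) (hdm : 0 < 1 - ε * (a ⬝ᵥ n)) :
    (fid (rhoBloch a) (postState (Mplus ε n) (rhoBloch a))
      = 1 - (1 - (a ⬝ᵥ n) ^ 2) * (1 - Real.sqrt (1 - ε ^ 2)) / (2 * (1 + ε * (a ⬝ᵥ n)))) ∧
    (fid (rhoBloch a) (postState (Mminus ε n) (rhoBloch a))
      = 1 - (1 - (a ⬝ᵥ n) ^ 2) * (1 - Real.sqrt (1 - ε ^ 2)) / (2 * (1 - ε * (a ⬝ᵥ n)))) ∧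
    ((a ⬝ᵥ n = 1 ∨ a ⬝ᵥ n = -1) →
      fid (rhoBloch a) (postState (Mplus ε n) (rhoBloch a)) = 1 ∧
      fid (rhoBloch a) (postState (Mminus ε n) (rhoBloch a)) = 1) ∧
    (a = 0 →
      fid (rhoBloch a) (postState (Mplus ε n) (rhoBloch a))
        = (1 + Real.sqrt (1 - ε ^ 2)) / 2) ∧
    StrictAntiOn (fun e : ℝ => (1 + Real.sqrt (1 - e ^ 2)) / 2) (Set.Icc 0 1) := by
  have hε : -1 ≤ ε := by linarith
  have hnn : n ⬝ᵥ n = 1 := by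
    rw [← hn]
    simp only [dotProduct, Fin.sum_univ_three, sq]
  have hplus := fid_rhoBloch_postState_Mplus hε hε1 hnn ha hdp
  have hminus : fid (rhoBloch a) (postState (Mminus ε n) (rhoBloch a))
      = 1 - (1 - (a ⬝ᵥ n) ^ 2) * (1 - √(1 - ε ^ 2)) / (2 * (1 - ε * (a ⬝ᵥ n))) := by
    rw [Mminus_eq_Mplus_neg, fid_rhoBloch_postState_Mplus hε hε1 (by simpa using hnn) ha
      (by simpa [sub_eq_add_neg] using hdm), dotProduct_neg]
    ring_nf
  refine ⟨hplus, hminus, ?_, ?_, ?_⟩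
  · rintro (h | h) <;> simp [hplus, hminus, h]
  · rintro rfl
    rw [hplus, zero_dotProduct]
    ring
  · intro x hx y hy hxy
    have := strictAntiOn_sqrt_one_sub_sq hx hy hxy
    dsimp only at this ⊢
    linarith
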